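/- arXiv:1610.02212 — 2 statements merged into one kernel-verified Lean document; each statement's English description precedes it below -/
import Mathlib

section
/- Let n be odd, 2k+1 = gcd(n, t), and a_0, ..., a_{2k} as in the standard construction. In DP(n, t), the paths Q_i : v_{a_i} y_{a_i} y_{a_i+1} ... y_{a_{i+2}−1} v_{a_{i+2}−1} for i ∈ ℤ_{2k+1} (indices of a taken mod 2k+1, vertex indices mod n) are pairwise internally disjoint and together contain every vertex y_m, m ∈ ℤ_n, exactly once. -/
inductive DPVert (n : ℕ) : Type
  | x : ZMod n → DPVert n
  | u : ZMod n → DPVert n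
  | v : ZMod n → DPVert n
  | y : ZMod n → DPVert n
  deriving DecidableEq

def DP (n t : ℕ) : SimpleGraph (DPVert n) :=
  SimpleGraph.fromRel (fun a b =>
    (∃ i, a = DPVert.x i ∧ b = DPVert.x (i + 1)) ∨
    (∃ i, a = DPVert.y i ∧ b = DPVert.y (i + 1)) ∨
    (∃ i, a = DPVert.x i ∧ b = DPVert.u i) ∨
    (∃ i, a = DPVert.y i ∧ b = DPVert.v i) ∨
    (∃ i, a = DPVert.u i ∧ b = DPVert.v (i + (t : ZMod n))) ∨
    (∃ i, a = DPVert.v i ∧ b = DPVert.u (i + (t : ZMod n))))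

/-- `a 0, a 1, …, a (2k)` is a "standard construction" sequence:
each `a i` lies in `{0, …, n-1}`, is congruent to `i` mod `2k+1`, and
`a 0 < a 2 < ⋯ < a (2k) < a 1 < a 3 < ⋯ < a (2k-1)`. -/
def GoodSeq (n k : ℕ) (a : ℕ → ℕ) : Prop :=
  (∀ i ≤ 2 * k, a i < n ∧ a i % (2 * k + 1) = i % (2 * k + 1)) ∧
  (∀ j, j < k → a (2 * j) < a (2 * j + 2)) ∧
  (0 < k → a (2 * k) < a 1) ∧
  (∀ j, j + 1 < k → a (2 * j + 1) < a (2 * j + 3))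

/-- Length of the cyclic interval `[a i, a ((i+2) % (2k+1)))` in `ℤ/nℤ`. -/
def intervalLen (n k : ℕ) (a : ℕ → ℕ) (i : ℕ) : ℕ :=
  (a ((i + 2) % (2 * k + 1)) + n - a i - 1) % n + 1

/-!
Read the indices in the order `σ m = 2m mod (2k+1)`, i.e. `0, 2, …, 2k, 1, 3, …, 2k-1`; then
`σ (m+1) = σ m + 2`, so `Q_{σ m}` runs along the `y`-cycle from `a_{σ m}` up to
`a_{σ (m+1)} - 1`. By the ordering hypothesis the breakpoints `a_{σ 0} < ⋯ < a_{σ (2k)} < a_0 + n`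
cut the window `[a_0, a_0 + n)` into consecutive intervals, and the window maps bijectively onto
`ℤ/nℤ`. Each `Q_i` is a path because its interval has length `≡ a_{i+2} - a_i ≡ 2 (mod 2k+1)`,
hence at least `2` (for `k = 0` the single interval is the whole window, of length `n ≥ 3`).
-/

open Set

namespace DP

variable {n : ℕ} (t : ℕ)

lemma adj_y_add_one (hn : 2 ≤ n) (s : ZMod n) : (DP n t).Adj (.y s) (.y (s + 1)) := by
  have : Fact (1 < n) := ⟨hn⟩
  rw [DP, SimpleGraph.fromRel_adj]
  exact ⟨by simp, .inl (.inr (.inl ⟨s, rfl, rfl⟩))⟩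

lemma adj_y_v (s : ZMod n) : (DP n t).Adj (.y s) (.v s) := by
  rw [DP, SimpleGraph.fromRel_adj]
  exact ⟨by simp, .inl (.inr (.inr (.inr (.inl ⟨s, rfl, rfl⟩))))⟩

lemma exists_walk_y (hn : 2 ≤ n) (s : ZMod n) (c : ℕ) :
    ∃ w : (DP n t).Walk (.y s) (.y (s + (c : ZMod n))),
      w.support = (List.range (c + 1)).map (fun j : ℕ => DPVert.y (s + (j : ZMod n))) := by
  induction c with
  | zero => exact ⟨.copy .nil rfl (by simp), by simp⟩
  | succ c ih =>
    obtain ⟨w, hw⟩ := ih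
    have hend : s + (c : ZMod n) + 1 = s + ((c + 1 : ℕ) : ZMod n) := by push_cast; ring
    refine ⟨(w.concat (adj_y_add_one t hn _)).copy rfl (by rw [hend]), ?_⟩
    rw [SimpleGraph.Walk.support_copy, SimpleGraph.Walk.support_concat, hw, hend,
      show List.range (c + 1 + 1) = _ from List.range_succ, List.map_append, List.map_singleton]

lemma exists_isPath_v_y_v (s : ZMod n) {L : ℕ} (hL : 2 ≤ L) (hLn : L ≤ n) :
    ∃ w : (DP n t).Walk (.v s) (.v (s + ((L - 1 : ℕ) : ZMod n))),
      w.IsPath ∧ w.support = .v s ::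
        ((List.range L).map (fun j : ℕ => DPVert.y (s + (j : ZMod n))) ++
          [.v (s + ((L - 1 : ℕ) : ZMod n))]) := by
  obtain ⟨w, hw⟩ := exists_walk_y t (hL.trans hLn) s (L - 1)
  rw [Nat.sub_add_cancel (by omega)] at hw
  have hsupp : ((w.concat (adj_y_v t _)).cons (adj_y_v t s).symm).support = .v s ::
      ((List.range L).map (fun j : ℕ => DPVert.y (s + (j : ZMod n))) ++
        [.v (s + ((L - 1 : ℕ) : ZMod n))]) := by
    rw [SimpleGraph.Walk.support_cons, SimpleGraph.Walk.support_concat, hw]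
  refine ⟨_, .mk' ?_, hsupp⟩
  have hinj : (Iio n).InjOn ((↑) : ℕ → ZMod n) := CharP.natCast_injOn_Iio (ZMod n) n
  have hne : (((L - 1 : ℕ) : ZMod n)) ≠ 0 := fun h =>
    absurd (hinj (by simp; omega) (by simp; omega) (h.trans Nat.cast_zero.symm)) (by omega)
  rw [hsupp, List.nodup_cons, List.nodup_append]
  refine ⟨by simp [hne], List.nodup_range.map_on fun i hi j hj h => ?_, by simp, by simp⟩
  simp only [List.mem_range, DPVert.y.injEq, add_right_inj] at hi hj h
  exact hinj (by simp; omega) (by simp; omega) h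

end DP

namespace ZMod

lemma natCast_injOn_Ico (s n : ℕ) : (Ico s (s + n)).InjOn ((↑) : ℕ → ZMod n) :=
  fun i hi j hj h => ((natCast_eq_natCast_iff _ _ _).1 h).eq_of_abs_lt <| by
    simp only [mem_Ico] at hi hj
    rw [abs_sub_lt_iff]; omega

lemma natCast_image_Ico (s n : ℕ) [NeZero n] : ((↑) : ℕ → ZMod n) '' Ico s (s + n) = univ :=
  eq_univ_of_forall fun z => ⟨s + (z - s).val, by simp [val_lt], by simp⟩

end ZMod

/-- The `m`-th index in the order `0, 2, …, 2k, 1, 3, …, 2k-1`. -/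
def sortedIndex (k m : ℕ) : ℕ := 2 * m % (2 * k + 1)

namespace sortedIndex

variable {k m : ℕ}

lemma lt (k m : ℕ) : sortedIndex k m < 2 * k + 1 := Nat.mod_lt _ (by omega)

@[simp] lemma zero (k : ℕ) : sortedIndex k 0 = 0 := by simp [sortedIndex]

lemma add_two_mod (k m : ℕ) : (sortedIndex k m + 2) % (2 * k + 1) = sortedIndex k (m + 1) := by
  simp only [sortedIndex, Nat.mod_add_mod, mul_add, mul_one]

lemma of_le (h : m ≤ k) : sortedIndex k m = 2 * m := Nat.mod_eq_of_lt (by omega)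

lemma of_lt (h : k < m) (hm : m < 2 * k + 1) : sortedIndex k m = 2 * (m - k) - 1 := by
  rw [sortedIndex, Nat.mod_eq_sub_mod (by omega), Nat.mod_eq_of_lt (by omega)]
  omega

lemma exists_eq {i : ℕ} (hi : i < 2 * k + 1) : ∃ m < 2 * k + 1, sortedIndex k m = i := by
  refine ⟨(k + 1) * i % (2 * k + 1), Nat.mod_lt _ (by omega), ?_⟩
  rw [sortedIndex, Nat.mul_mod, Nat.mod_mod, ← Nat.mul_mod, ← mul_assoc,
    show 2 * (k + 1) * i = i + (2 * k + 1) * i by ring, Nat.add_mul_mod_self_left,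
    Nat.mod_eq_of_lt hi]

end sortedIndex

lemma intervalLen_eq {n k : ℕ} {a : ℕ → ℕ} {i : ℕ} (hi : a i < n)
    (hi₂ : a ((i + 2) % (2 * k + 1)) < n) :
    intervalLen n k a i = if a i < a ((i + 2) % (2 * k + 1)) then
      a ((i + 2) % (2 * k + 1)) - a i else a ((i + 2) % (2 * k + 1)) + n - a i := by
  unfold intervalLen
  split_ifs with h
  · rw [show _ + n - a i - 1 = (a ((i + 2) % (2 * k + 1)) - a i - 1) + n by omega,
      Nat.add_mod_right, Nat.mod_eq_of_lt (by omega)]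
    omega
  · rw [Nat.mod_eq_of_lt (by omega)]
    omega

lemma intervalLen_le {n : ℕ} (hn : 0 < n) (k : ℕ) (a : ℕ → ℕ) (i : ℕ) :
    intervalLen n k a i ≤ n :=
  Nat.mod_lt _ hn

lemma natCast_intervalLen {n k : ℕ} {a : ℕ → ℕ} {i : ℕ} (hi : a i < n) :
    (intervalLen n k a i : ZMod n) = a ((i + 2) % (2 * k + 1)) - a i := by
  rw [intervalLen, Nat.cast_add, ZMod.natCast_mod, Nat.cast_sub (by omega),
    Nat.cast_sub (by omega)]
  push_cast
  rw [ZMod.natCast_self]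
  ring

/-- The `m`-th smallest of `a 0, …, a (2k)`, and `a 0 + n` once all of them are used up. -/
def breakpoint (n k : ℕ) (a : ℕ → ℕ) (m : ℕ) : ℕ :=
  if m < 2 * k + 1 then a (sortedIndex k m) else a 0 + n

@[simp] lemma breakpoint_zero (n k : ℕ) (a : ℕ → ℕ) : breakpoint n k a 0 = a 0 := by
  simp [breakpoint]

@[simp] lemma breakpoint_two_mul_add_one (n k : ℕ) (a : ℕ → ℕ) :
    breakpoint n k a (2 * k + 1) = a 0 + n := by
  simp [breakpoint]

lemma injOn_y_natCast_Ico (n s : ℕ) :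
    (Ico s (s + n)).InjOn (fun j : ℕ => DPVert.y (j : ZMod n)) :=
  fun _ hi _ hj h => ZMod.natCast_injOn_Ico s n hi hj (DPVert.y.inj h)

def yArc (n s L : ℕ) : Set (DPVert n) :=
  (fun j : ℕ => DPVert.y ((s : ZMod n) + (j : ZMod n))) '' Iio L

lemma yArc_eq_image_Ico (n s L : ℕ) :
    yArc n s L = (fun j : ℕ => DPVert.y (j : ZMod n)) '' Ico s (s + L) := by
  have hshift : (fun j : ℕ => s + j) '' Iio L = Ico s (s + L) := by
    rw [← Ico_bot, image_const_add_Ico, Nat.bot_eq_zero, add_zero]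
  rw [← hshift, image_image, yArc]
  simp only [Nat.cast_add]

namespace GoodSeq

variable {n k : ℕ} {a : ℕ → ℕ}

lemma lt_of_le (ha : GoodSeq n k a) {i : ℕ} (hi : i ≤ 2 * k) : a i < n := (ha.1 i hi).1

lemma natCast_zmod (ha : GoodSeq n k a) {i : ℕ} (hi : i ≤ 2 * k) :
    (a i : ZMod (2 * k + 1)) = i :=
  (ZMod.natCast_eq_natCast_iff' _ _ _).2 (ha.1 i hi).2

lemma sortedIndex_lt_sortedIndex_succ (ha : GoodSeq n k a) {m : ℕ} (hm : m + 1 < 2 * k + 1) :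
    a (sortedIndex k m) < a (sortedIndex k (m + 1)) := by
  obtain ⟨-, hev, hmid, hodd⟩ := ha
  rcases lt_trichotomy m k with h | rfl | h
  · rw [sortedIndex.of_le h.le, sortedIndex.of_le h]
    exact hev m h
  · rw [sortedIndex.of_le le_rfl, sortedIndex.of_lt (by omega) hm]
    convert hmid (by omega) using 2
    omega
  · rw [sortedIndex.of_lt h (by omega), sortedIndex.of_lt (by omega) hm]
    convert hodd (m - k - 1) (by omega) using 2 <;> omega

lemma two_le_intervalLen (ha : GoodSeq n k a) (hn : 3 ≤ n) (hdvd : 2 * k + 1 ∣ n) {i : ℕ}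
    (hi : i < 2 * k + 1) : 2 ≤ intervalLen n k a i := by
  rcases Nat.eq_zero_or_pos k with rfl | hk
  · obtain rfl : i = 0 := by omega
    simp [intervalLen, Nat.mod_eq_of_lt (show n - 1 < n by omega)]
    omega
  by_contra! hlt
  have h1 : intervalLen n k a i = 1 := le_antisymm (by omega) (Nat.le_add_left 1 _)
  have key := congrArg (ZMod.castHom hdvd (ZMod (2 * k + 1)))
    (natCast_intervalLen (k := k) (ha.lt_of_le (i := i) (by omega)))
  simp only [h1, Nat.cast_one, map_one, map_sub, map_natCast] at key
  rw [ha.natCast_zmod (i := i) (by omega),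
    ha.natCast_zmod (Nat.le_of_lt_succ (Nat.mod_lt _ (by omega))),
    ZMod.natCast_mod] at key
  have : ((1 : ℕ) : ZMod (2 * k + 1)) = 0 := by push_cast at key ⊢; linear_combination -key
  rw [ZMod.natCast_eq_zero_iff] at this
  have := Nat.le_of_dvd one_pos this
  omega

lemma monotone_breakpoint (ha : GoodSeq n k a) : Monotone (breakpoint n k a) := by
  refine monotone_nat_of_le_succ fun m => ?_
  unfold breakpoint
  split_ifs with h h' h'
  · exact (ha.sortedIndex_lt_sortedIndex_succ h').le
  · have := ha.lt_of_le (Nat.le_of_lt_succ (sortedIndex.lt k m))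
    omega
  · omega
  · rfl

lemma intervalLen_sortedIndex (ha : GoodSeq n k a) {m : ℕ} (hm : m < 2 * k + 1) :
    intervalLen n k a (sortedIndex k m) = breakpoint n k a (m + 1) - breakpoint n k a m := by
  have hlt : ∀ i, a (sortedIndex k i) < n :=
    fun i => ha.lt_of_le (Nat.le_of_lt_succ (sortedIndex.lt k i))
  have hle := ha.monotone_breakpoint (Nat.zero_le m)
  rw [intervalLen_eq (hlt m) (sortedIndex.add_two_mod k m ▸ hlt (m + 1)),
    sortedIndex.add_two_mod]
  unfold breakpoint at hle ⊢
  by_cases hm' : m + 1 < 2 * k + 1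
  · simp only [hm', hm, if_true, ha.sortedIndex_lt_sortedIndex_succ hm']
  · obtain rfl : m = 2 * k := by omega
    have h0 : sortedIndex k (2 * k + 1) = 0 := by simp [sortedIndex]
    simp only [hm, Nat.zero_lt_succ, if_true, sortedIndex.zero, lt_irrefl, if_false, h0] at hle ⊢
    exact if_neg hle.not_gt

lemma yArc_sortedIndex (ha : GoodSeq n k a) {m : ℕ} (hm : m < 2 * k + 1) :
    yArc n (a (sortedIndex k m)) (intervalLen n k a (sortedIndex k m)) =
      (fun j : ℕ => DPVert.y (j : ZMod n)) ''
        Ico (breakpoint n k a m) (breakpoint n k a (m + 1)) := by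
  have hbm : a (sortedIndex k m) = breakpoint n k a m := (if_pos hm).symm
  rw [yArc_eq_image_Ico, ha.intervalLen_sortedIndex hm, hbm,
    Nat.add_sub_cancel' (ha.monotone_breakpoint m.le_succ)]

lemma Ico_breakpoint_subset (ha : GoodSeq n k a) {l : ℕ} (hl : l < 2 * k + 1) :
    Ico (breakpoint n k a l) (breakpoint n k a (l + 1)) ⊆ Ico (a 0) (a 0 + n) := by
  rw [← breakpoint_two_mul_add_one n k a, ← breakpoint_zero n k a]
  exact Ico_subset_Ico (ha.monotone_breakpoint (Nat.zero_le l)) (ha.monotone_breakpoint hl)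

lemma pairwise_disjoint_yArc (ha : GoodSeq n k a) :
    (Iio (2 * k + 1)).Pairwise fun i i' =>
      Disjoint (yArc n (a i) (intervalLen n k a i)) (yArc n (a i') (intervalLen n k a i')) := by
  intro i hi i' hi' hne
  obtain ⟨m, hm, rfl⟩ := sortedIndex.exists_eq hi
  obtain ⟨m', hm', rfl⟩ := sortedIndex.exists_eq hi'
  have hIco := ha.monotone_breakpoint.pairwise_disjoint_on_Ico_succ
    (fun h => hne (congrArg _ h) : m ≠ m')
  simp only [Function.onFun, Order.succ_eq_add_one] at hIco
  rw [ha.yArc_sortedIndex hm, ha.yArc_sortedIndex hm', disjoint_iff_inter_eq_empty,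
    ← (injOn_y_natCast_Ico n (a 0)).image_inter (ha.Ico_breakpoint_subset hm)
      (ha.Ico_breakpoint_subset hm'),
    disjoint_iff_inter_eq_empty.1 hIco, image_empty]

lemma biUnion_yArc [NeZero n] (ha : GoodSeq n k a) :
    ⋃ i ∈ Iio (2 * k + 1), yArc n (a i) (intervalLen n k a i) =
      {w | ∃ m, w = DPVert.y m} := by
  refine Subset.antisymm (iUnion₂_subset fun i _ => image_subset_iff.2 fun j _ => ⟨_, rfl⟩) ?_
  rintro _ ⟨z, rfl⟩
  obtain ⟨j, hj, rfl⟩ : z ∈ ((↑) : ℕ → ZMod n) '' Ico (a 0) (a 0 + n) := by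
    rw [ZMod.natCast_image_Ico]; trivial
  have hj' : j ∈ Ico (breakpoint n k a 0) (breakpoint n k a (2 * k + 1)) := by
    rwa [breakpoint_zero, breakpoint_two_mul_add_one]
  obtain ⟨m, hm, hjm⟩ := mem_iUnion₂.1 (Ico_subset_biUnion_Ico _ _ hj')
  rw [Finset.mem_range] at hm
  refine mem_iUnion₂.2 ⟨sortedIndex k m, sortedIndex.lt k m, ?_⟩
  rw [ha.yArc_sortedIndex hm]
  exact mem_image_of_mem _ hjm

lemma exists_isPath_along_interval (t : ℕ) (ha : GoodSeq n k a) (hn : 3 ≤ n)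
    (hdvd : 2 * k + 1 ∣ n) {i : ℕ} (hi : i < 2 * k + 1) :
    ∃ w : (DP n t).Walk (DPVert.v (a i)) (DPVert.v ((a ((i + 2) % (2 * k + 1)) : ZMod n) - 1)),
      w.IsPath ∧ w.support = DPVert.v (a i) ::
        ((List.range (intervalLen n k a i)).map
            (fun j : ℕ => DPVert.y ((a i : ZMod n) + (j : ZMod n))) ++
          [DPVert.v ((a ((i + 2) % (2 * k + 1)) : ZMod n) - 1)]) := by
  have hL := ha.two_le_intervalLen hn hdvd hi
  have hend : (a i : ZMod n) + ((intervalLen n k a i - 1 : ℕ) : ZMod n) =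
      a ((i + 2) % (2 * k + 1)) - 1 := by
    rw [Nat.cast_sub (by omega), natCast_intervalLen (ha.lt_of_le (by omega))]
    ring
  rw [← hend]
  exact DP.exists_isPath_v_y_v t _ hL (intervalLen_le (by omega) k a i)

end GoodSeq

theorem Q_paths_cover_y_general (n t k : ℕ) (hn : 3 ≤ n)
    (hgcd : Nat.gcd n t = 2 * k + 1) (a : ℕ → ℕ) (ha : GoodSeq n k a) :
    (∀ i < 2 * k + 1,
      ∃ w : (DP n t).Walk (DPVert.v (a i))
          (DPVert.v ((a ((i + 2) % (2 * k + 1)) : ZMod n) - 1)),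
        w.IsPath ∧
        w.support =
          DPVert.v (a i) ::
            ((List.range (intervalLen n k a i)).map
              (fun j => DPVert.y ((a i : ZMod n) + (j : ZMod n))) ++
             [DPVert.v ((a ((i + 2) % (2 * k + 1)) : ZMod n) - 1)])) ∧
    (Set.Iio (2 * k + 1)).Pairwise (fun i i' : ℕ =>
      Disjoint
        ((fun j : ℕ => DPVert.y ((a i : ZMod n) + (j : ZMod n))) ''
          Set.Iio (intervalLen n k a i))
        ((fun j : ℕ => DPVert.y ((a i' : ZMod n) + (j : ZMod n))) ''
          Set.Iio (intervalLen n k a i'))) ∧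
    (⋃ i ∈ Set.Iio (2 * k + 1),
        (fun j : ℕ => DPVert.y ((a i : ZMod n) + (j : ZMod n))) ''
          Set.Iio (intervalLen n k a i))
      = {w : DPVert n | ∃ m, w = DPVert.y m} := by
  have : NeZero n := ⟨by omega⟩
  have hdvd : 2 * k + 1 ∣ n := hgcd ▸ Nat.gcd_dvd_left n t
  refine ⟨fun i hi => ?_, ha.pairwise_disjoint_yArc, ha.biUnion_yArc⟩
  -- the statement maps over `List.range _` coerced to `List (ZMod n)`
  simpa only [bind_pure_comp, List.map_eq_map, List.map_map, Function.comp_def]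
    using ha.exists_isPath_along_interval t hn hdvd hi

theorem Q_paths_cover_y (n t k : ℕ) (hn : 3 ≤ n) (ht : 2 ≤ 2 * t) (htn : 2 * t < n)
    (hodd : Odd n) (hgcd : Nat.gcd n t = 2 * k + 1) (a : ℕ → ℕ) (ha : GoodSeq n k a) :
    (∀ i < 2 * k + 1,
      ∃ w : (DP n t).Walk (DPVert.v (a i))
          (DPVert.v ((a ((i + 2) % (2 * k + 1)) : ZMod n) - 1)),
        w.IsPath ∧
        w.support =
          DPVert.v (a i) ::
            ((List.range (intervalLen n k a i)).map
              (fun j => DPVert.y ((a i : ZMod n) + (j : ZMod n))) ++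
             [DPVert.v ((a ((i + 2) % (2 * k + 1)) : ZMod n) - 1)])) ∧
    (Set.Iio (2 * k + 1)).Pairwise (fun i i' : ℕ =>
      Disjoint
        ((fun j : ℕ => DPVert.y ((a i : ZMod n) + (j : ZMod n))) ''
          Set.Iio (intervalLen n k a i))
        ((fun j : ℕ => DPVert.y ((a i' : ZMod n) + (j : ZMod n))) ''
          Set.Iio (intervalLen n k a i'))) ∧
    (⋃ i ∈ Set.Iio (2 * k + 1),
        (fun j : ℕ => DPVert.y ((a i : ZMod n) + (j : ZMod n))) ''
          Set.Iio (intervalLen n k a i))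
      = {w : DPVert n | ∃ m, w = DPVert.y m} :=
  Q_paths_cover_y_general n t k hn hgcd a ha
end

section
/- Let n be odd, 2k+1 = gcd(n, t), and a_0, ..., a_{2k} as in the standard construction. In DP(n, t), the paths P_i : u_{a_i+t} x_{a_i+t} x_{a_i+t+1} ... x_{a_{i+2}+t−1} u_{a_{i+2}+t−1} for i ∈ ℤ_{2k+1} together contain every vertex x_m, m ∈ ℤ_n, exactly once. -/
/-! Listed as `a 0 < a 2 < ⋯ < a (2k) < a 1 < ⋯ < a (2k-1)`, each `a (i + 2)` is the successor of
`a i` (cyclically), so the arcs `[a i + t, a (i + 2) + t)` tile `ZMod n`. Consecutive terms of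
this list differ by `2` modulo `2k+1`, which divides `n`; hence every arc has at least two points
and `P i`, which runs `u → x → ⋯ → x → u` along it, is a path. -/

open SimpleGraph

namespace DP

variable {n t : ℕ}

lemma adj_x_succ (hn : n ≠ 1) (i : ZMod n) : (DP n t).Adj (DPVert.x i) (DPVert.x (i + 1)) := by
  have := ZMod.nontrivial_iff.2 hn
  refine (fromRel_adj _ _ _).2 ⟨fun h => ?_, Or.inl (Or.inl ⟨i, rfl, rfl⟩)⟩
  exact one_ne_zero (left_eq_add.1 (DPVert.x.inj h))

lemma adj_x_u (i : ZMod n) : (DP n t).Adj (DPVert.x i) (DPVert.u i) :=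
  (fromRel_adj _ _ _).2 ⟨nofun, Or.inl (Or.inr (Or.inr (Or.inl ⟨i, rfl, rfl⟩)))⟩

lemma exists_walk_x (hn : n ≠ 1) (b : ZMod n) (l : ℕ) :
    ∃ w : (DP n t).Walk (DPVert.x b) (DPVert.x (b + (l : ZMod n))),
      w.support = (List.range (l + 1)).map fun j : ℕ => DPVert.x (b + (j : ZMod n)) := by
  induction l with
  | zero => exact ⟨Walk.nil.copy rfl (by simp), by simp⟩
  | succ l ih =>
    obtain ⟨w, hw⟩ := ih
    refine ⟨(w.concat (adj_x_succ hn _)).copy rfl (by push_cast; ring_nf), ?_⟩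
    rw [Walk.support_copy, Walk.support_concat, hw, List.range_succ (n := l + 1), List.map_append]
    simp [add_assoc]

lemma exists_path_u_x_u {L : ℕ} (hL : 2 ≤ L) (hLn : L ≤ n) (b e : ZMod n)
    (he : b + L - 1 = e) :
    ∃ w : (DP n t).Walk (DPVert.u b) (DPVert.u e), w.IsPath ∧
      w.support = DPVert.u b ::
        ((List.range L).map (fun j : ℕ => DPVert.x (b + (j : ZMod n))) ++ [DPVert.u e]) := by
  have he' : b + ((L - 1 : ℕ) : ZMod n) = e := by rw [Nat.cast_sub (by omega), ← he]; ring
  obtain ⟨w, hw⟩ := exists_walk_x (t := t) (by omega) b (L - 1)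
  have hsupp : ((w.concat (adj_x_u _)).cons (adj_x_u b).symm).support = DPVert.u b ::
      ((List.range L).map (fun j : ℕ => DPVert.x (b + (j : ZMod n))) ++
        [DPVert.u (b + ((L - 1 : ℕ) : ZMod n))]) := by
    rw [Walk.support_cons, Walk.support_concat, hw, Nat.sub_add_cancel (by omega)]
  subst he'
  refine ⟨_, ?_, hsupp⟩
  have hinj : Set.InjOn (fun j : ℕ => DPVert.x (b + (j : ZMod n))) {j | j ∈ List.range L} := by
    intro j hj j' hj' h
    simp only [List.mem_range, Set.mem_ofPred_eq] at hj hj'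
    have := congrArg ZMod.val (add_left_cancel (DPVert.x.inj h))
    rwa [ZMod.val_cast_of_lt (by omega), ZMod.val_cast_of_lt (by omega)] at this
  have hne : b ≠ b + ((L - 1 : ℕ) : ZMod n) := by
    intro h
    have := congrArg ZMod.val (left_eq_add.1 h)
    rw [ZMod.val_cast_of_lt (by omega), ZMod.val_zero] at this
    omega
  rw [Walk.isPath_def, hsupp, List.nodup_cons, List.nodup_append]
  refine ⟨?_, List.nodup_range.map_on fun j hj j' hj' h => hinj hj hj' h, List.nodup_singleton _,
    ?_⟩ <;> simp [hne]

end DP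

lemma Nat.ModEq.eq_of_le_of_lt_add {n c x y : ℕ} (h : x ≡ y [MOD n]) (hx : c ≤ x)
    (hx' : x < c + n) (hy : c ≤ y) (hy' : y < c + n) : x = y :=
  h.eq_of_abs_lt (by rw [abs_sub_lt_iff]; omega)

lemma Monotone.existsUnique_le_lt_succ {s : ℕ → ℕ} (hs : Monotone s) {m r : ℕ}
    (h0 : s 0 ≤ r) (hm : r < s m) : ∃! j, j < m ∧ s j ≤ r ∧ r < s (j + 1) := by
  have hex : ∀ m, r < s m → ∃ j, j < m ∧ s j ≤ r ∧ r < s (j + 1) := by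
    intro m hm
    induction m with
    | zero => omega
    | succ m ih =>
      by_cases h : r < s m
      · obtain ⟨j, hj, hjr⟩ := ih h
        exact ⟨j, by omega, hjr⟩
      · exact ⟨m, by omega, by omega, hm⟩
  obtain ⟨j, hj, hjr⟩ := hex m hm
  refine ⟨j, ⟨hj, hjr⟩, fun j' ⟨_, hj'r⟩ => ?_⟩
  by_contra hne
  rcases Nat.lt_or_gt_of_ne hne with h | h
  · have := hs (show j' + 1 ≤ j by omega); omega
  · have := hs (show j + 1 ≤ j' by omega); omega

/-- Lift `c` to `r ∈ [s 0, s 0 + n)`: then `c` lies on the arc from `s j` to `s (j + 1)` iff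
`s j ≤ r < s (j + 1)`. -/
lemma existsUnique_natCast_add_eq_of_monotone {n : ℕ} [NeZero n] {s : ℕ → ℕ} (hs : Monotone s)
    {m : ℕ} (hsm : s m = s 0 + n) (c : ZMod n) :
    ∃! j, j < m ∧ ∃ l < s (j + 1) - s j, (s j : ZMod n) + l = c := by
  set r := s 0 + (c - (s 0 : ZMod n)).val
  have hr : (r : ZMod n) = c := by simp [r]
  have hrn : r < s 0 + n := by have := ZMod.val_lt (c - (s 0 : ZMod n)); omega
  have harc : ∀ j < m, (∃ l < s (j + 1) - s j, (s j : ZMod n) + l = c) ↔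
      s j ≤ r ∧ r < s (j + 1) := by
    intro j hj
    have hsj : s 0 ≤ s j := hs (Nat.zero_le j)
    have hsj1 : s (j + 1) ≤ s m := hs hj
    constructor
    · rintro ⟨l, hl, hc⟩
      have hmod : s j + l ≡ r [MOD n] := by
        rw [← ZMod.natCast_eq_natCast_iff, hr, ← hc, Nat.cast_add]
      have := hmod.eq_of_le_of_lt_add (c := s 0) (by omega) (by omega) (by omega) hrn
      omega
    · rintro ⟨h1, h2⟩
      exact ⟨r - s j, by omega, by rw [Nat.cast_sub h1, add_sub_cancel, hr]⟩
  obtain ⟨j, ⟨hj, hjr⟩, huniq⟩ := hs.existsUnique_le_lt_succ (Nat.le_add_right _ _)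
    (show r < s m by omega)
  exact ⟨j, ⟨hj, (harc j hj).2 hjr⟩, fun j' ⟨hj', h⟩ => huniq j' ⟨hj', (harc j' hj').1 h⟩⟩

lemma two_mul_mod_add_two (k j : ℕ) :
    (2 * j % (2 * k + 1) + 2) % (2 * k + 1) = 2 * (j + 1) % (2 * k + 1) := by
  rw [Nat.mod_add_mod, mul_add_one]

lemma two_mul_mod_le (k j : ℕ) : 2 * j % (2 * k + 1) ≤ 2 * k :=
  Nat.le_of_lt_succ (Nat.mod_lt _ (by omega))

lemma exists_two_mul_mod_eq {k i : ℕ} (hi : i < 2 * k + 1) :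
    ∃ j ≤ 2 * k, 2 * j % (2 * k + 1) = i := by
  refine ⟨i * (k + 1) % (2 * k + 1), Nat.le_of_lt_succ (Nat.mod_lt _ (by omega)), ?_⟩
  rw [Nat.mul_mod, Nat.mod_mod, ← Nat.mul_mod,
    show 2 * (i * (k + 1)) = i + (2 * k + 1) * i by ring, Nat.add_mul_mod_self_left,
    Nat.mod_eq_of_lt hi]

section SortedSeq

variable {n k : ℕ} {a : ℕ → ℕ} {i j : ℕ}

/-- For `j ≤ 2k` this lists `a 0 < a 2 < ⋯ < a (2k) < a 1 < ⋯ < a (2k-1)`; the value `a 0 + n`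
afterwards closes the cycle. -/
def sortedSeq (n k : ℕ) (a : ℕ → ℕ) (j : ℕ) : ℕ :=
  if j ≤ 2 * k then a (2 * j % (2 * k + 1)) else a 0 + n

lemma sortedSeq_of_le (hj : j ≤ 2 * k) : sortedSeq n k a j = a (2 * j % (2 * k + 1)) :=
  if_pos hj

lemma sortedSeq_of_lt (hj : 2 * k < j) : sortedSeq n k a j = a 0 + n :=
  if_neg (by omega)

lemma sortedSeq_zero : sortedSeq n k a 0 = a 0 := by
  simp [sortedSeq]

lemma natCast_sortedSeq (hj : j ≤ 2 * k + 1) :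
    (sortedSeq n k a j : ZMod n) = a (2 * j % (2 * k + 1)) := by
  rcases Nat.lt_or_ge (2 * k) j with h | h
  · rw [sortedSeq_of_lt h, show j = 2 * k + 1 by omega, Nat.mul_mod_left, Nat.cast_add,
      ZMod.natCast_self, add_zero]
  · rw [sortedSeq_of_le h]

namespace GoodSeq

lemma sortedSeq_lt_succ (ha : GoodSeq n k a) (hj : j ≤ 2 * k) :
    sortedSeq n k a j < sortedSeq n k a (j + 1) := by
  obtain ⟨hlt, heven, hmid, hodd⟩ := ha
  rw [sortedSeq_of_le hj]
  by_cases hj' : j = 2 * k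
  · rw [sortedSeq_of_lt (show 2 * k < j + 1 by omega)]
    have := (hlt _ (two_mul_mod_le k j)).1
    omega
  rw [sortedSeq_of_le (show j + 1 ≤ 2 * k by omega)]
  rcases Nat.lt_trichotomy j k with h | rfl | h
  · rw [Nat.mod_eq_of_lt (by omega), Nat.mod_eq_of_lt (by omega)]
    exact heven j h
  · rw [Nat.mod_eq_of_lt (by omega), show 2 * (j + 1) = 1 + (2 * j + 1) by ring,
      Nat.add_mod_right, Nat.mod_eq_of_lt (by omega)]
    exact hmid (by omega)
  · have hmod : ∀ i, k < i → i ≤ 2 * k → 2 * i % (2 * k + 1) = 2 * (i - k - 1) + 1 := by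
      intro i hi hi'
      rw [Nat.mod_eq_sub_mod (by omega), Nat.mod_eq_of_lt (by omega)]
      omega
    rw [hmod j h (by omega), hmod (j + 1) (by omega) (by omega),
      show j + 1 - k - 1 = (j - k - 1) + 1 by omega, mul_add_one]
    exact hodd _ (by omega)

lemma monotone_sortedSeq (ha : GoodSeq n k a) : Monotone (sortedSeq n k a) := by
  refine monotone_nat_of_le_succ fun j => ?_
  by_cases hj : j ≤ 2 * k
  · exact (ha.sortedSeq_lt_succ hj).le
  · rw [sortedSeq_of_lt (by omega), sortedSeq_of_lt (by omega)]

lemma sortedSeq_modEq (ha : GoodSeq n k a) (hdvd : 2 * k + 1 ∣ n) (hj : j ≤ 2 * k + 1) :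
    sortedSeq n k a j ≡ 2 * j [MOD 2 * k + 1] := by
  rcases Nat.lt_or_ge (2 * k) j with h | h
  · rw [sortedSeq_of_lt h, show j = 2 * k + 1 by omega]
    have ha0 : a 0 ≡ 0 [MOD 2 * k + 1] := (ha.1 0 (Nat.zero_le _)).2
    exact (ha0.add (Nat.modEq_zero_iff_dvd.2 hdvd)).trans
      (Nat.modEq_zero_iff_dvd.2 (dvd_mul_left _ _)).symm
  · rw [sortedSeq_of_le h]
    exact (ha.1 _ (two_mul_mod_le k j)).2.trans (Nat.mod_modEq _ _)

/-- Consecutive terms differ by `2` modulo `2k+1`, hence by at least `2`. -/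
lemma sortedSeq_add_two_le (ha : GoodSeq n k a) (hn : 2 ≤ n) (hdvd : 2 * k + 1 ∣ n)
    (hj : j ≤ 2 * k) :
    sortedSeq n k a j + 2 ≤ sortedSeq n k a (j + 1) := by
  rcases Nat.eq_zero_or_pos k with rfl | hk
  · rw [show j = 0 by omega, sortedSeq_zero, sortedSeq_of_lt (by omega)]
    omega
  have hlt := ha.sortedSeq_lt_succ hj
  by_contra hcon
  have hsucc : sortedSeq n k a (j + 1) = sortedSeq n k a j + 1 := by omega
  have h1 : 2 * j + 1 ≡ 2 * j + 2 [MOD 2 * k + 1] := by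
    have := ha.sortedSeq_modEq hdvd (j := j + 1) (by omega)
    rw [hsucc, mul_add_one] at this
    exact ((ha.sortedSeq_modEq hdvd (by omega)).add_right 1).symm.trans this
  have := (Nat.ModEq.add_left_cancel' (2 * j) h1).eq_of_lt_of_lt (by omega) (by omega)
  omega

lemma sortedSeq_succ_le_add (ha : GoodSeq n k a) (hj : j ≤ 2 * k) :
    sortedSeq n k a (j + 1) ≤ sortedSeq n k a j + n := by
  have h1 := ha.monotone_sortedSeq (show j + 1 ≤ 2 * k + 1 by omega)
  have h0 := ha.monotone_sortedSeq (Nat.zero_le j)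
  rw [sortedSeq_of_lt (Nat.lt_succ_self (2 * k))] at h1
  rw [sortedSeq_zero] at h0
  omega

lemma intervalLen_two_mul_mod (ha : GoodSeq n k a) (hj : j ≤ 2 * k) :
    intervalLen n k a (2 * j % (2 * k + 1)) = sortedSeq n k a (j + 1) - sortedSeq n k a j := by
  have hlt := ha.sortedSeq_lt_succ hj
  have hle := ha.sortedSeq_succ_le_add hj
  rw [intervalLen, two_mul_mod_add_two, ← sortedSeq_of_le (n := n) (a := a) hj]
  by_cases hj' : j = 2 * k
  · rw [sortedSeq_of_lt (show 2 * k < j + 1 by omega)] at hlt hle ⊢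
    subst hj'
    rw [Nat.mul_mod_left, Nat.mod_eq_of_lt (by omega)]
    omega
  · rw [← sortedSeq_of_le (n := n) (a := a) (show j + 1 ≤ 2 * k by omega),
      show sortedSeq n k a (j + 1) + n - sortedSeq n k a j - 1
        = sortedSeq n k a (j + 1) - sortedSeq n k a j - 1 + n by omega,
      Nat.add_mod_right, Nat.mod_eq_of_lt (by omega)]
    omega

lemma intervalLen_mem_Icc (ha : GoodSeq n k a) (hn : 2 ≤ n) (hdvd : 2 * k + 1 ∣ n)
    (hi : i < 2 * k + 1) : 2 ≤ intervalLen n k a i ∧ intervalLen n k a i ≤ n := by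
  obtain ⟨j, hj, rfl⟩ := exists_two_mul_mod_eq hi
  rw [ha.intervalLen_two_mul_mod hj]
  have := ha.sortedSeq_add_two_le hn hdvd hj
  have := ha.sortedSeq_succ_le_add hj
  omega

lemma natCast_intervalLen (ha : GoodSeq n k a) (hi : i < 2 * k + 1) :
    (intervalLen n k a i : ZMod n) = a ((i + 2) % (2 * k + 1)) - a i := by
  obtain ⟨j, hj, rfl⟩ := exists_two_mul_mod_eq hi
  rw [ha.intervalLen_two_mul_mod hj, Nat.cast_sub (ha.sortedSeq_lt_succ hj).le,
    natCast_sortedSeq (by omega), natCast_sortedSeq (by omega), two_mul_mod_add_two]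

/-- In the order of `sortedSeq`, the arc of length `intervalLen n k a i` starting at `a i` ends
where the next arc starts. -/
lemma existsUnique_natCast_add_eq [NeZero n] (ha : GoodSeq n k a) (c : ZMod n) :
    ∃! i, i < 2 * k + 1 ∧ ∃ l < intervalLen n k a i, (a i : ZMod n) + l = c := by
  have hcycle : sortedSeq n k a (2 * k + 1) = sortedSeq n k a 0 + n := by
    rw [sortedSeq_of_lt (Nat.lt_succ_self _), sortedSeq_zero]
  obtain ⟨j, ⟨hj, hjc⟩, huniq⟩ :=
    existsUnique_natCast_add_eq_of_monotone ha.monotone_sortedSeq hcycle c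
  have hiff : ∀ j ≤ 2 * k, (∃ l < intervalLen n k a (2 * j % (2 * k + 1)),
      (a (2 * j % (2 * k + 1)) : ZMod n) + l = c) ↔
      ∃ l < sortedSeq n k a (j + 1) - sortedSeq n k a j,
        (sortedSeq n k a j : ZMod n) + l = c := by
    intro j hj
    rw [ha.intervalLen_two_mul_mod hj, sortedSeq_of_le hj]
  refine ⟨2 * j % (2 * k + 1), ⟨Nat.mod_lt _ (by omega), (hiff j (by omega)).2 hjc⟩, ?_⟩
  rintro i ⟨hi, hic⟩
  obtain ⟨j', hj', rfl⟩ := exists_two_mul_mod_eq hi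
  rw [huniq j' ⟨by omega, (hiff j' hj').1 hic⟩]

end GoodSeq

end SortedSeq

theorem P_paths_cover_x_general (n t k : ℕ) (hn : 3 ≤ n)
    (hgcd : Nat.gcd n t = 2 * k + 1) (a : ℕ → ℕ) (ha : GoodSeq n k a) :
    (∀ i < 2 * k + 1,
      ∃ w : (DP n t).Walk (DPVert.u ((a i : ZMod n) + (t : ZMod n)))
          (DPVert.u ((a ((i + 2) % (2 * k + 1)) : ZMod n) + (t : ZMod n) - 1)),
        w.IsPath ∧
        w.support =
          DPVert.u ((a i : ZMod n) + (t : ZMod n)) ::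
            ((List.range (intervalLen n k a i)).map
              (fun j => DPVert.x ((a i : ZMod n) + (t : ZMod n) + (j : ZMod n))) ++
             [DPVert.u ((a ((i + 2) % (2 * k + 1)) : ZMod n) + (t : ZMod n) - 1)])) ∧
    (Set.Iio (2 * k + 1)).Pairwise (fun i i' : ℕ =>
      Disjoint
        ((fun j : ℕ => DPVert.x ((a i : ZMod n) + (t : ZMod n) + (j : ZMod n))) ''
          Set.Iio (intervalLen n k a i))
        ((fun j : ℕ => DPVert.x ((a i' : ZMod n) + (t : ZMod n) + (j : ZMod n))) ''
          Set.Iio (intervalLen n k a i'))) ∧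
    (⋃ i ∈ Set.Iio (2 * k + 1),
        (fun j : ℕ => DPVert.x ((a i : ZMod n) + (t : ZMod n) + (j : ZMod n))) ''
          Set.Iio (intervalLen n k a i))
      = {w : DPVert n | ∃ m, w = DPVert.x m} := by
  have : NeZero n := ⟨by omega⟩
  have hdvd : 2 * k + 1 ∣ n := hgcd ▸ Nat.gcd_dvd_left n t
  refine ⟨fun i hi => ?_, fun i hi i' hi' hne => ?_, ?_⟩
  · obtain ⟨hL, hLn⟩ := ha.intervalLen_mem_Icc (by omega) hdvd hi
    have hend : (a i : ZMod n) + t + intervalLen n k a i - 1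
        = a ((i + 2) % (2 * k + 1)) + t - 1 := by
      linear_combination ha.natCast_intervalLen hi
    obtain ⟨w, hw, hsupp⟩ := DP.exists_path_u_x_u (t := t) hL hLn _ _ hend
    refine ⟨w, hw, hsupp.trans ?_⟩
    -- the statement coerces `List.range _` to `List (ZMod n)` through the list monad
    simp only [bind_pure_comp, List.map_eq_map, List.map_map, Function.comp_def]
  · refine Set.disjoint_left.2 ?_
    rintro _ ⟨j, hj, rfl⟩ ⟨j', hj', hjj'⟩
    have hx := DPVert.x.inj hjj'
    exact hne ((ha.existsUnique_natCast_add_eq (a i + j)).unique ⟨hi, j, hj, rfl⟩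
      ⟨hi', j', hj', by linear_combination hx⟩)
  · ext v
    simp only [Set.mem_iUnion, Set.mem_image, Set.mem_Iio, Set.mem_ofPred_eq]
    constructor
    · rintro ⟨i, -, j, -, rfl⟩
      exact ⟨_, rfl⟩
    · rintro ⟨c, rfl⟩
      obtain ⟨i, ⟨hi, j, hj, hc⟩, -⟩ := ha.existsUnique_natCast_add_eq (c - t)
      exact ⟨i, hi, j, hj, by rw [add_right_comm, hc, sub_add_cancel]⟩

theorem P_paths_cover_x (n t k : ℕ) (hn : 3 ≤ n) (ht : 2 ≤ 2 * t) (htn : 2 * t < n)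
    (hodd : Odd n) (hgcd : Nat.gcd n t = 2 * k + 1) (a : ℕ → ℕ) (ha : GoodSeq n k a) :
    (∀ i < 2 * k + 1,
      ∃ w : (DP n t).Walk (DPVert.u ((a i : ZMod n) + (t : ZMod n)))
          (DPVert.u ((a ((i + 2) % (2 * k + 1)) : ZMod n) + (t : ZMod n) - 1)),
        w.IsPath ∧
        w.support =
          DPVert.u ((a i : ZMod n) + (t : ZMod n)) ::
            ((List.range (intervalLen n k a i)).map
              (fun j => DPVert.x ((a i : ZMod n) + (t : ZMod n) + (j : ZMod n))) ++
             [DPVert.u ((a ((i + 2) % (2 * k + 1)) : ZMod n) + (t : ZMod n) - 1)])) ∧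
    (Set.Iio (2 * k + 1)).Pairwise (fun i i' : ℕ =>
      Disjoint
        ((fun j : ℕ => DPVert.x ((a i : ZMod n) + (t : ZMod n) + (j : ZMod n))) ''
          Set.Iio (intervalLen n k a i))
        ((fun j : ℕ => DPVert.x ((a i' : ZMod n) + (t : ZMod n) + (j : ZMod n))) ''
          Set.Iio (intervalLen n k a i'))) ∧
    (⋃ i ∈ Set.Iio (2 * k + 1),
        (fun j : ℕ => DPVert.x ((a i : ZMod n) + (t : ZMod n) + (j : ZMod n))) ''
          Set.Iio (intervalLen n k a i))
      = {w : DPVert n | ∃ m, w = DPVert.x m} :=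
  P_paths_cover_x_general n t k hn hgcd a ha
end
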